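/- For every r ∈ ℂ, the operators (E,H,F,X,Y) on U_0^{osp}(r) form an osp(1|2)-representation, i.e. they satisfy all twelve relations: H∘E−E∘H=2E, H∘F−F∘H=−2F, E∘F−F∘E=H, H∘X−X∘H=X, E∘X−X∘E=0, F∘X−X∘F=−Y, H∘Y−Y∘H=−Y, E∘Y−Y∘E=−X, F∘Y−Y∘F=0, X∘X=E, X∘Y+Y∘X=H, Y∘Y=−F. -/

import Mathlib

/-!
The `osp(1|2)`-module `U_0^{osp}(r)`: underlying space `(ℤ ⊕ ℤ) →₀ ℂ`, where
`Sum.inl i` encodes the basis vector `E_i` and `Sum.inr i` encodes the basis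
vector `E_{i−1/2}`.
-/

/-- An `osp(1|2)`-representation on a complex vector space `W`: a 5-tuple of
endomorphisms `(E,H,F,X,Y)` satisfying the twelve defining relations of `osp(1|2)`
realized by ungraded operators. -/
def IsOspRep {W : Type*} [AddCommGroup W] [Module ℂ W]
    (E H F X Y : Module.End ℂ W) : Prop :=
  H * E - E * H = (2 : ℂ) • E ∧
  H * F - F * H = (-2 : ℂ) • F ∧
  E * F - F * E = H ∧
  H * X - X * H = X ∧
  E * X - X * E = 0 ∧
  F * X - X * F = -Y ∧
  H * Y - Y * H = -Y ∧
  E * Y - Y * E = -X ∧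
  F * Y - Y * F = 0 ∧
  X * X = E ∧
  X * Y + Y * X = H ∧
  Y * Y = -F

/-- `E·E_i = E_{i−1}`, `E·E_{i−1/2} = E_{i−3/2}`. -/
noncomputable def Eosp : Module.End ℂ ((ℤ ⊕ ℤ) →₀ ℂ) :=
  Finsupp.lift ((ℤ ⊕ ℤ) →₀ ℂ) ℂ (ℤ ⊕ ℤ)
    (Sum.elim (fun i => Finsupp.single (Sum.inl (i - 1)) 1)
              (fun i => Finsupp.single (Sum.inr (i - 1)) 1))

/-- `H·E_i = −(2i+2r+1)·E_i`, `H·E_{i−1/2} = −(2i+2r)·E_{i−1/2}`. -/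
noncomputable def Hosp (r : ℂ) : Module.End ℂ ((ℤ ⊕ ℤ) →₀ ℂ) :=
  Finsupp.lift ((ℤ ⊕ ℤ) →₀ ℂ) ℂ (ℤ ⊕ ℤ)
    (Sum.elim (fun i => (-(2 * (i : ℂ) + 2 * r + 1)) • Finsupp.single (Sum.inl i) 1)
              (fun i => (-(2 * (i : ℂ) + 2 * r)) • Finsupp.single (Sum.inr i) 1))

/-- `F·E_i = −(r+i+1)²·E_{i+1}`, `F·E_{i−1/2} = −(r+i+1)(r+i)·E_{i+1/2}`. -/
noncomputable def Fosp (r : ℂ) : Module.End ℂ ((ℤ ⊕ ℤ) →₀ ℂ) :=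
  Finsupp.lift ((ℤ ⊕ ℤ) →₀ ℂ) ℂ (ℤ ⊕ ℤ)
    (Sum.elim
      (fun i => (-((r + (i : ℂ) + 1) ^ 2)) • Finsupp.single (Sum.inl (i + 1)) 1)
      (fun i => (-((r + (i : ℂ) + 1) * (r + (i : ℂ)))) • Finsupp.single (Sum.inr (i + 1)) 1))

/-- `X·E_i = E_{i−1/2}`, `X·E_{i−1/2} = E_{i−1}`. -/
noncomputable def Xosp : Module.End ℂ ((ℤ ⊕ ℤ) →₀ ℂ) :=
  Finsupp.lift ((ℤ ⊕ ℤ) →₀ ℂ) ℂ (ℤ ⊕ ℤ)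
    (Sum.elim (fun i => Finsupp.single (Sum.inr i) 1)
              (fun i => Finsupp.single (Sum.inl (i - 1)) 1))

/-- `Y·E_i = −(r+i+1)·E_{i+1/2}`, `Y·E_{i−1/2} = −(r+i)·E_i`. -/
noncomputable def Yosp (r : ℂ) : Module.End ℂ ((ℤ ⊕ ℤ) →₀ ℂ) :=
  Finsupp.lift ((ℤ ⊕ ℤ) →₀ ℂ) ℂ (ℤ ⊕ ℤ)
    (Sum.elim (fun i => (-(r + (i : ℂ) + 1)) • Finsupp.single (Sum.inr (i + 1)) 1)
              (fun i => (-(r + (i : ℂ))) • Finsupp.single (Sum.inl i) 1))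

/-! Every operator sends a basis vector to a multiple of a basis vector, so each relation,
checked on `E_i` and on `E_{i−1/2}`, becomes a polynomial identity in `r` and `i`. -/

open Finsupp

lemma Finsupp.linearMap_ext_sum_single_one {R M ι κ : Type*} [Semiring R] [AddCommMonoid M]
    [Module R M] {φ ψ : ((ι ⊕ κ) →₀ R) →ₗ[R] M}
    (hl : ∀ i, φ (single (.inl i) 1) = ψ (single (.inl i) 1))
    (hr : ∀ j, φ (single (.inr j) 1) = ψ (single (.inr j) 1)) : φ = ψ :=
  Finsupp.basisSingleOne.ext <| by rintro (i | j) <;> simp [hl, hr]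

section BasisAction

variable (r : ℂ) (i : ℤ)

@[simp] lemma Eosp_single_inl : Eosp (single (.inl i) 1) = single (.inl (i - 1)) 1 := by
  simp [Eosp]

@[simp] lemma Eosp_single_inr : Eosp (single (.inr i) 1) = single (.inr (i - 1)) 1 := by
  simp [Eosp]

@[simp] lemma Hosp_single_inl :
    Hosp r (single (.inl i) 1) = (-(2 * (i : ℂ) + 2 * r + 1)) • single (.inl i) 1 := by
  simp [Hosp]

@[simp] lemma Hosp_single_inr :
    Hosp r (single (.inr i) 1) = (-(2 * (i : ℂ) + 2 * r)) • single (.inr i) 1 := by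
  simp [Hosp]

@[simp] lemma Fosp_single_inl :
    Fosp r (single (.inl i) 1) = (-((r + (i : ℂ) + 1) ^ 2)) • single (.inl (i + 1)) 1 := by
  simp [Fosp]

@[simp] lemma Fosp_single_inr :
    Fosp r (single (.inr i) 1) =
      (-((r + (i : ℂ) + 1) * (r + (i : ℂ)))) • single (.inr (i + 1)) 1 := by
  simp [Fosp]

@[simp] lemma Xosp_single_inl : Xosp (single (.inl i) 1) = single (.inr i) 1 := by
  simp [Xosp]

@[simp] lemma Xosp_single_inr : Xosp (single (.inr i) 1) = single (.inl (i - 1)) 1 := by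
  simp [Xosp]

@[simp] lemma Yosp_single_inl :
    Yosp r (single (.inl i) 1) = (-(r + (i : ℂ) + 1)) • single (.inr (i + 1)) 1 := by
  simp [Yosp]

@[simp] lemma Yosp_single_inr :
    Yosp r (single (.inr i) 1) = (-(r + (i : ℂ))) • single (.inl i) 1 := by
  simp [Yosp]

end BasisAction

/-- The operators `(E,H,F,X,Y)` on `U_0^{osp}(r)` form an `osp(1|2)`-representation,
i.e. satisfy all twelve defining relations. -/
theorem U0osp_is_osp_representation (r : ℂ) :
    IsOspRep Eosp (Hosp r) (Fosp r) Xosp (Yosp r) := by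
  refine ⟨?_, ?_, ?_, ?_, ?_, ?_, ?_, ?_, ?_, ?_, ?_, ?_⟩ <;>
    refine linearMap_ext_sum_single_one (fun i => ?_) (fun i => ?_) <;>
    simp only [Module.End.mul_apply, LinearMap.sub_apply, LinearMap.add_apply,
      LinearMap.smul_apply, LinearMap.neg_apply, LinearMap.zero_apply, map_smul, Eosp_single_inl, Eosp_single_inr, Hosp_single_inl, Hosp_single_inr,
      Fosp_single_inl, Fosp_single_inr, Xosp_single_inl, Xosp_single_inr, Yosp_single_inl,
      Yosp_single_inr, sub_add_cancel, add_sub_cancel_right, Int.cast_add, Int.cast_sub,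
      Int.cast_one] <;>
    module
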